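/- arXiv:1611.06650 — 8 statements merged into one kernel-verified Lean document; each statement's English description precedes it below -/
import Mathlib

section
/- The truncated binary entropy is subadditive: for all reals a, b ≥ 0, hc(a + b) ≤ hc(a) + hc(b). -/
/-!
`hc` is the composition of the concave function `x ↦ min x (1/2)` with `h`, which is concave and
nondecreasing on `[0, 1/2]`; hence `hc` is concave on `[0, ∞)`, and it vanishes at `0`. A concave
function `f` on `[0, ∞)` with `f 0 ≥ 0` is subadditive, because `f a` and `f b` dominate
`a/(a+b) · f (a+b)` and `b/(a+b) · f (a+b)` respectively.
-/

/-- The base-2 binary entropy function, with the convention `0 * log 0 = 0`. -/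
noncomputable def binEnt (x : ℝ) : ℝ :=
  -(x * Real.logb 2 x) - (1 - x) * Real.logb 2 (1 - x)

/-- The truncated binary entropy `hc(x) = h(min(x, 1/2))`. -/
noncomputable def hc (x : ℝ) : ℝ := binEnt (min x (1 / 2))

open Real Set

theorem ConcaveOn.map_add_le {𝕜 : Type*} [Field 𝕜] [LinearOrder 𝕜] [IsStrictOrderedRing 𝕜]
    {f : 𝕜 → 𝕜} (hf : ConcaveOn 𝕜 (Ici 0) f) (hf₀ : 0 ≤ f 0) {a b : 𝕜} (ha : 0 ≤ a)
    (hb : 0 ≤ b) : f (a + b) ≤ f a + f b := by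
  rcases (add_nonneg ha hb).eq_or_lt with hab | hab
  · obtain ⟨rfl, rfl⟩ : a = 0 ∧ b = 0 := ⟨by linarith, by linarith⟩
    simpa using hf₀
  -- concavity along the segment from `0` to `a + b`, which passes through `t`
  have key : ∀ t, 0 ≤ t → t ≤ a + b → t / (a + b) * f (a + b) ≤ f t := by
    intro t ht hts
    have hw : t / (a + b) ≤ 1 := (div_le_one hab).2 hts
    have := hf.2 self_mem_Ici (mem_Ici.2 hab.le) (sub_nonneg.2 hw) (by positivity)
      (sub_add_cancel _ _)
    simp only [smul_eq_mul, mul_zero, zero_add, div_mul_cancel₀ t hab.ne'] at this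
    nlinarith [mul_nonneg (sub_nonneg.2 hw) hf₀]
  calc f (a + b) = a / (a + b) * f (a + b) + b / (a + b) * f (a + b) := by
        rw [← add_mul, ← add_div, div_self hab.ne', one_mul]
    _ ≤ f a + f b := add_le_add (key a ha (by linarith)) (key b hb (by linarith))

lemma image_min_Ici_zero {c : ℝ} (hc : 0 ≤ c) : (fun x => min x c) '' Ici 0 = Icc 0 c := by
  ext y
  constructor
  · rintro ⟨x, hx, rfl⟩
    exact ⟨le_min hx hc, min_le_right x c⟩
  · rintro ⟨hy₀, hyc⟩
    exact ⟨y, hy₀, min_eq_left hyc⟩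

lemma binEnt_eq_inv_log_two_mul_binEntropy (x : ℝ) : binEnt x = (log 2)⁻¹ * binEntropy x := by
  simp only [binEnt, binEntropy, logb, log_inv]
  ring

lemma concaveOn_binEnt : ConcaveOn ℝ (Icc 0 1) binEnt := by
  rw [show binEnt = fun x => (log 2)⁻¹ * binEntropy x from
    funext binEnt_eq_inv_log_two_mul_binEntropy]
  exact strictConcave_binEntropy.concaveOn.smul (inv_nonneg.2 (log_nonneg one_le_two))

lemma monotoneOn_binEnt : MonotoneOn binEnt (Icc 0 (1 / 2)) := by
  intro x hx y hy hxy
  rw [one_div] at hx hy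
  rw [binEnt_eq_inv_log_two_mul_binEntropy, binEnt_eq_inv_log_two_mul_binEntropy]
  exact mul_le_mul_of_nonneg_left (binEntropy_strictMonoOn.monotoneOn hx hy hxy)
    (inv_nonneg.2 (log_nonneg one_le_two))

lemma concaveOn_hc : ConcaveOn ℝ (Ici 0) hc := by
  have hmin : ConcaveOn ℝ (Ici 0) fun x : ℝ => min x (1 / 2) :=
    (concaveOn_id (convex_Ici 0)).inf (concaveOn_const _ (convex_Ici 0))
  have himage := image_min_Ici_zero (by norm_num : (0 : ℝ) ≤ 1 / 2)
  refine ConcaveOn.comp (g := binEnt) ?_ hmin ?_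
  · rw [himage]
    exact concaveOn_binEnt.subset (Icc_subset_Icc_right (by norm_num)) (convex_Icc 0 _)
  · rw [himage]
    exact monotoneOn_binEnt

/-- `hc` is subadditive: for all `a, b ≥ 0`, `hc(a + b) ≤ hc(a) + hc(b)`. -/
theorem stmt_3 (a b : ℝ) (ha : 0 ≤ a) (hb : 0 ≤ b) :
    hc (a + b) ≤ hc a + hc b :=
  concaveOn_hc.map_add_le (by simp [hc, binEnt]) ha hb
end

section
/- Let 𝒳, 𝒴, 𝒵 be finite sets, f : 𝒳 × 𝒴 → 𝒵 a function, and S ⊆ 𝒳 × 𝒴 a set (the support of an input distribution). Then S is structurally internal-trivial for f if and only if for every connected component C of the graph G_S, the function f is constant on C_A × C_B. -/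
/-!
A partition witnessing structural internal triviality must keep every edge of `G_S` inside one
block `𝒳ᵢ × 𝒴ᵢ`, since blocks are separated in both coordinates; so a whole connected component
lies in one block, on which `f` is constant. Conversely, the projections `C_A`, `C_B` of the
connected components are themselves partitions of `S_A` and `S_B`: two points of `S` sharing a
coordinate are adjacent, so a coordinate value determines its component.
-/

/-- The graph `G_S` on `𝒳 × 𝒴` induced by the set `S`: two distinct pairs of `S` are
adjacent iff they agree on one of their coordinates.  (Vertices outside `S` are isolated.) -/
def inputGraph {𝒳 𝒴 : Type} (S : Set (𝒳 × 𝒴)) : SimpleGraph (𝒳 × 𝒴) where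
  Adj a b := a ≠ b ∧ (a.1 = b.1 ∨ a.2 = b.2) ∧ a ∈ S ∧ b ∈ S
  symm := ⟨fun a b ⟨h1, h2, h3, h4⟩ => ⟨h1.symm, h2.imp Eq.symm Eq.symm, h4, h3⟩⟩
  loopless := ⟨fun a h => h.1 rfl⟩

/-- `S` is structurally internal-trivial for `f`: there are partitions of the projections
`S_A = ⋃ᵢ 𝒳ᵢ` and `S_B = ⋃ᵢ 𝒴ᵢ` with `S ⊆ ⋃ᵢ 𝒳ᵢ × 𝒴ᵢ` and `f` constant on each `𝒳ᵢ × 𝒴ᵢ`. -/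
def StructurallyInternalTrivial {𝒳 𝒴 𝒵 : Type} (f : 𝒳 × 𝒴 → 𝒵) (S : Set (𝒳 × 𝒴)) : Prop :=
  ∃ (I : Type) (XI : I → Set 𝒳) (YI : I → Set 𝒴),
    (Prod.fst '' S = ⋃ i, XI i) ∧ Pairwise (Function.onFun Disjoint XI) ∧
    (Prod.snd '' S = ⋃ i, YI i) ∧ Pairwise (Function.onFun Disjoint YI) ∧
    (S ⊆ ⋃ i, XI i ×ˢ YI i) ∧
    (∀ i : I, ∀ a ∈ XI i ×ˢ YI i, ∀ b ∈ XI i ×ˢ YI i, f a = f b)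

theorem SimpleGraph.Reachable.mem_of_adj_closed {V : Type*} {G : SimpleGraph V} {B : Set V}
    (hB : ∀ ⦃a b⦄, a ∈ B → G.Adj a b → b ∈ B) {u v : V} (hu : u ∈ B)
    (h : G.Reachable u v) : v ∈ B := by
  rw [SimpleGraph.reachable_iff_reflTransGen] at h
  induction h with
  | refl => exact hu
  | tail _ hadj ih => exact hB ih hadj

section

variable {𝒳 𝒴 : Type} {S : Set (𝒳 × 𝒴)}

theorem inputGraph_adj_mem_block {I : Type} {XI : I → Set 𝒳} {YI : I → Set 𝒴}
    (hXd : Pairwise (Function.onFun Disjoint XI)) (hYd : Pairwise (Function.onFun Disjoint YI))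
    (hsub : S ⊆ ⋃ i, XI i ×ˢ YI i) {i : I} {a b : 𝒳 × 𝒴} (ha : a ∈ XI i ×ˢ YI i)
    (hab : (inputGraph S).Adj a b) : b ∈ XI i ×ˢ YI i := by
  obtain ⟨-, hcoord, -, hbS⟩ := hab
  obtain ⟨j, hb⟩ := Set.mem_iUnion.mp (hsub hbS)
  obtain rfl : i = j := by
    by_contra hij
    rcases hcoord with h | h
    · exact Set.disjoint_left.mp (hXd hij) ha.1 (h ▸ hb.1)
    · exact Set.disjoint_left.mp (hYd hij) ha.2 (h ▸ hb.2)
  exact hb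

theorem inputGraph_reachable_of_fst_eq {x : 𝒳} {y y' : 𝒴} (h : (x, y) ∈ S)
    (h' : (x, y') ∈ S) : (inputGraph S).Reachable (x, y) (x, y') := by
  by_cases hy : y = y'
  · rw [hy]
  · exact SimpleGraph.Adj.reachable ⟨by simp [hy], Or.inl rfl, h, h'⟩

theorem inputGraph_reachable_of_snd_eq {x x' : 𝒳} {y : 𝒴} (h : (x, y) ∈ S)
    (h' : (x', y) ∈ S) : (inputGraph S).Reachable (x, y) (x', y) := by
  by_cases hx : x = x'
  · rw [hx]
  · exact SimpleGraph.Adj.reachable ⟨by simp [hx], Or.inr rfl, h, h'⟩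

variable (S)

/-- `C_A` for the connected component `c`. -/
def componentFst (c : (inputGraph S).ConnectedComponent) : Set 𝒳 :=
  {x | ∃ y, (x, y) ∈ S ∧ (inputGraph S).connectedComponentMk (x, y) = c}

/-- `C_B` for the connected component `c`. -/
def componentSnd (c : (inputGraph S).ConnectedComponent) : Set 𝒴 :=
  {y | ∃ x, (x, y) ∈ S ∧ (inputGraph S).connectedComponentMk (x, y) = c}

theorem iUnion_componentFst : ⋃ c, componentFst S c = Prod.fst '' S := by
  ext x
  simp only [componentFst, Set.mem_iUnion, Set.mem_ofPred_eq, Set.mem_image, Prod.exists,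
    exists_and_right, exists_eq_right]
  exact ⟨fun ⟨_, y, hxy, _⟩ => ⟨y, hxy⟩, fun ⟨y, hxy⟩ => ⟨_, y, hxy, rfl⟩⟩

theorem iUnion_componentSnd : ⋃ c, componentSnd S c = Prod.snd '' S := by
  ext y
  simp only [componentSnd, Set.mem_iUnion, Set.mem_ofPred_eq, Set.mem_image, Prod.exists,
    exists_eq_right]
  exact ⟨fun ⟨_, x, hxy, _⟩ => ⟨x, hxy⟩, fun ⟨x, hxy⟩ => ⟨_, x, hxy, rfl⟩⟩

theorem pairwise_disjoint_componentFst : Pairwise (Function.onFun Disjoint (componentFst S)) := by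
  intro c c' hne
  refine Set.disjoint_left.mpr ?_
  rintro x ⟨y, hxy, rfl⟩ ⟨y', hxy', rfl⟩
  exact hne (SimpleGraph.ConnectedComponent.sound (inputGraph_reachable_of_fst_eq hxy hxy'))

theorem pairwise_disjoint_componentSnd : Pairwise (Function.onFun Disjoint (componentSnd S)) := by
  intro c c' hne
  refine Set.disjoint_left.mpr ?_
  rintro y ⟨x, hxy, rfl⟩ ⟨x', hxy', rfl⟩
  exact hne (SimpleGraph.ConnectedComponent.sound (inputGraph_reachable_of_snd_eq hxy hxy'))

theorem subset_iUnion_componentFst_prod_componentSnd :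
    S ⊆ ⋃ c, componentFst S c ×ˢ componentSnd S c := fun p hp =>
  Set.mem_iUnion.mpr ⟨_, ⟨p.2, hp, rfl⟩, ⟨p.1, hp, rfl⟩⟩

end

theorem stmt_6_general {𝒳 𝒴 𝒵 : Type}
    (f : 𝒳 × 𝒴 → 𝒵) (S : Set (𝒳 × 𝒴)) :
    StructurallyInternalTrivial f S ↔
      ∀ v ∈ S, ∀ (x x' : 𝒳) (y y' : 𝒴),
        (∃ b, (inputGraph S).Reachable v (x, b)) →
        (∃ a, (inputGraph S).Reachable v (a, y)) →
        (∃ b, (inputGraph S).Reachable v (x', b)) →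
        (∃ a, (inputGraph S).Reachable v (a, y')) →
        f (x, y) = f (x', y') := by
  constructor
  · rintro ⟨I, XI, YI, -, hXd, -, hYd, hsub, hconst⟩ v hv x x' y y'
      ⟨_, hx⟩ ⟨_, hy⟩ ⟨_, hx'⟩ ⟨_, hy'⟩
    obtain ⟨i, hvi⟩ := Set.mem_iUnion.mp (hsub hv)
    have inBlock {w} (h : (inputGraph S).Reachable v w) : w ∈ XI i ×ˢ YI i :=
      h.mem_of_adj_closed (fun _ _ => inputGraph_adj_mem_block hXd hYd hsub) hvi
    exact hconst i (x, y) ⟨(inBlock hx).1, (inBlock hy).2⟩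
      (x', y') ⟨(inBlock hx').1, (inBlock hy').2⟩
  · intro hconst
    refine ⟨_, componentFst S, componentSnd S, (iUnion_componentFst S).symm,
      pairwise_disjoint_componentFst S, (iUnion_componentSnd S).symm,
      pairwise_disjoint_componentSnd S, subset_iUnion_componentFst_prod_componentSnd S, ?_⟩
    rintro c ⟨x, y⟩ ⟨⟨b, hxb, rfl⟩, ⟨a, -, hc⟩⟩ ⟨x', y'⟩ ⟨⟨b', -, hc'⟩, ⟨a', -, hc''⟩⟩
    have fromRep {p} (h : (inputGraph S).connectedComponentMk p =
        (inputGraph S).connectedComponentMk (x, b)) : (inputGraph S).Reachable (x, b) p :=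
      (SimpleGraph.ConnectedComponent.exact h).symm
    exact hconst (x, b) hxb x x' y y' ⟨b, .rfl⟩ ⟨a, fromRep hc⟩ ⟨b', fromRep hc'⟩
      ⟨a', fromRep hc''⟩

/-- `S` is structurally internal-trivial for `f` iff for every connected component `C` of
`G_S` (given by a representative `v ∈ S`), `f` is constant on `C_A × C_B`. -/
theorem stmt_6 {𝒳 𝒴 𝒵 : Type} [Fintype 𝒳] [Fintype 𝒴] [Fintype 𝒵]
    (f : 𝒳 × 𝒴 → 𝒵) (S : Set (𝒳 × 𝒴)) :
    StructurallyInternalTrivial f S ↔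
      ∀ v ∈ S, ∀ (x x' : 𝒳) (y y' : 𝒴),
        (∃ b, (inputGraph S).Reachable v (x, b)) →
        (∃ a, (inputGraph S).Reachable v (a, y)) →
        (∃ b, (inputGraph S).Reachable v (x', b)) →
        (∃ a, (inputGraph S).Reachable v (a, y')) →
        f (x, y) = f (x', y') :=
  stmt_6_general f S
end

section
/- The function φ defined on [0,1/2] by φ(q) = h((1 + √(1 − 4q²))/2) is strictly increasing on [0,1/2] and strictly convex on [0,1/2]. -/
open Real Set

lemma binEnt_eq_binEntropy_div (x : ℝ) : binEnt x = binEntropy x / log 2 := by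
  simp only [binEnt, binEntropy, logb, log_inv]
  ring

lemma strictAntiOn_binEnt : StrictAntiOn binEnt (Icc 2⁻¹ 1) := fun x hx y hy hxy => by
  simpa only [binEnt_eq_binEntropy_div] using
    div_lt_div_of_pos_right (binEntropy_strictAntiOn hx hy hxy) (log_pos one_lt_two)

lemma two_mul_lt_log_one_add_sub_log_one_sub {s : ℝ} (hs₀ : 0 < s) (hs₁ : s < 1) :
    2 * s < log (1 + s) - log (1 - s) := by
  have h := sum_le_hasSum (Finset.range 2) (fun k _ => by positivity)
    (hasSum_log_sub_log_of_abs_lt_one (abs_lt.2 ⟨by linarith, hs₁⟩))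
  simp only [Finset.sum_range_succ, Finset.sum_range_zero, Nat.cast_zero, Nat.cast_one] at h
  linarith [pow_pos hs₀ 3]

lemma hasDerivAt_log_one_add_sub_log_one_sub {s : ℝ} (hs₀ : -1 < s) (hs₁ : s < 1) :
    HasDerivAt (fun t => log (1 + t) - log (1 - t)) (2 / (1 - s ^ 2)) s := by
  have hp : 1 + s ≠ 0 := by linarith
  have hm : 1 - s ≠ 0 := by linarith
  refine (((hasDerivAt_id' s).const_add 1).log hp |>.sub
    (((hasDerivAt_id' s).const_sub 1).log hm)).congr_deriv ?_
  rw [show 1 - s ^ 2 = (1 + s) * (1 - s) by ring]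
  field_simp
  ring

noncomputable def psi (s : ℝ) : ℝ := √(1 - s ^ 2) * (log (1 + s) - log (1 - s)) / s

lemma hasDerivAt_psi {s : ℝ} (hs₀ : 0 < s) (hs₁ : s < 1) :
    HasDerivAt psi ((2 * s - (log (1 + s) - log (1 - s))) / (√(1 - s ^ 2) * s ^ 2)) s := by
  have hpos : 0 < 1 - s ^ 2 := by nlinarith
  have hr : √(1 - s ^ 2) ^ 2 = 1 - s ^ 2 := sq_sqrt hpos.le
  have hr₀ : 0 < √(1 - s ^ 2) := sqrt_pos.2 hpos
  have hsqrt : HasDerivAt (fun t => √(1 - t ^ 2)) (-(2 * s) / (2 * √(1 - s ^ 2))) s := by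
    simpa using ((hasDerivAt_pow 2 s).const_sub 1).sqrt hpos.ne'
  refine ((hsqrt.mul (hasDerivAt_log_one_add_sub_log_one_sub (by linarith) hs₁)).div
    (hasDerivAt_id' s) hs₀.ne').congr_deriv ?_
  rw [Pi.mul_apply]
  field_simp
  linear_combination (2 * s - (1 - s ^ 2) * (log (1 + s) - log (1 - s))) * hr

lemma strictAntiOn_psi : StrictAntiOn psi (Ioo 0 1) := by
  refine strictAntiOn_of_deriv_neg (convex_Ioo 0 1)
    (fun s hs => (hasDerivAt_psi hs.1 hs.2).continuousAt.continuousWithinAt) fun s hs => ?_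
  rw [interior_Ioo] at hs
  rw [(hasDerivAt_psi hs.1 hs.2).deriv]
  have hpos : 0 < 1 - s ^ 2 := by nlinarith [hs.1, hs.2]
  exact div_neg_of_neg_of_pos (by linarith [two_mul_lt_log_one_add_sub_log_one_sub hs.1 hs.2])
    (mul_pos (sqrt_pos.2 hpos) (pow_pos hs.1 2))

lemma strictAntiOn_sqrt_one_sub_four_mul_sq :
    StrictAntiOn (fun q : ℝ => √(1 - 4 * q ^ 2)) (Icc 0 (1 / 2)) := fun a ha b hb hab =>
  sqrt_lt_sqrt (by nlinarith [hb.1, hb.2]) (by nlinarith [ha.1])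

lemma sqrt_one_sub_four_mul_sq_mem_Ioo {q : ℝ} (hq₀ : 0 < q) (hq₁ : q < 1 / 2) :
    √(1 - 4 * q ^ 2) ∈ Ioo 0 1 :=
  ⟨sqrt_pos.2 (by nlinarith), (sqrt_lt' one_pos).2 (by nlinarith)⟩

lemma strictAntiOn_half_one_add_sqrt :
    StrictAntiOn (fun q : ℝ => (1 + √(1 - 4 * q ^ 2)) / 2) (Icc 0 (1 / 2)) :=
  fun a ha b hb hab => by linarith [strictAntiOn_sqrt_one_sub_four_mul_sq ha hb hab]

lemma mapsTo_half_one_add_sqrt :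
    MapsTo (fun q : ℝ => (1 + √(1 - 4 * q ^ 2)) / 2) (Icc 0 (1 / 2)) (Icc 2⁻¹ 1) := by
  intro q hq
  have : √(1 - 4 * q ^ 2) ≤ 1 := sqrt_le_one.mpr (by nlinarith)
  constructor <;> dsimp only <;> linarith [sqrt_nonneg (1 - 4 * q ^ 2)]

lemma hasDerivAt_binEnt_half_one_add_sqrt {q : ℝ} (hq₀ : 0 < q) (hq₁ : q < 1 / 2) :
    HasDerivAt (fun q => binEnt ((1 + √(1 - 4 * q ^ 2)) / 2))
      (psi (√(1 - 4 * q ^ 2)) / log 2) q := by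
  have hpos : 0 < 1 - 4 * q ^ 2 := by nlinarith
  obtain ⟨hs₀, hs₁⟩ := sqrt_one_sub_four_mul_sq_mem_Ioo hq₀ hq₁
  set s := √(1 - 4 * q ^ 2) with hs
  have hpsi : psi s = 2 * q * (log (1 + s) - log (1 - s)) / s := by
    rw [psi, hs, sq_sqrt hpos.le, show 1 - (1 - 4 * q ^ 2) = (2 * q) ^ 2 by ring,
      sqrt_sq (by linarith)]
  have hinner : HasDerivAt (fun q => (1 + √(1 - 4 * q ^ 2)) / 2) (-(2 * q) / s) q := by
    refine ((((hasDerivAt_pow 2 q).const_mul 4).const_sub 1).sqrt hpos.ne' |>.const_add 1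
      |>.div_const 2).congr_deriv ?_
    field_simp
    ring
  have houter := (hasDerivAt_binEntropy (p := (1 + s) / 2) (by linarith) (by linarith)).div_const
    (log 2)
  simp only [binEnt_eq_binEntropy_div]
  refine (houter.comp q hinner).congr_deriv ?_
  rw [hpsi, show 1 - (1 + s) / 2 = (1 - s) / 2 by ring, log_div (by linarith) two_ne_zero,
    log_div (by linarith) two_ne_zero]
  field_simp
  ring

/-- The function `φ(q) = h((1 + √(1 − 4q²))/2)` is strictly increasing and strictly
convex on `[0, 1/2]`. -/
theorem stmt_7 :
    StrictMonoOn (fun q : ℝ => binEnt ((1 + Real.sqrt (1 - 4 * q ^ 2)) / 2))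
      (Set.Icc (0 : ℝ) (1 / 2)) ∧
    StrictConvexOn ℝ (Set.Icc (0 : ℝ) (1 / 2))
      (fun q : ℝ => binEnt ((1 + Real.sqrt (1 - 4 * q ^ 2)) / 2)) := by
  have hcont : Continuous fun q : ℝ => binEnt ((1 + √(1 - 4 * q ^ 2)) / 2) := by
    simp only [binEnt_eq_binEntropy_div]
    fun_prop
  refine ⟨strictAntiOn_binEnt.comp strictAntiOn_half_one_add_sqrt mapsTo_half_one_add_sqrt,
    StrictMonoOn.strictConvexOn_of_deriv (convex_Icc _ _) hcont.continuousOn ?_⟩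
  rw [interior_Icc]
  intro a ha b hb hab
  rw [(hasDerivAt_binEnt_half_one_add_sqrt ha.1 ha.2).deriv,
    (hasDerivAt_binEnt_half_one_add_sqrt hb.1 hb.2).deriv]
  have hlt := strictAntiOn_sqrt_one_sub_four_mul_sq (Ioo_subset_Icc_self ha)
    (Ioo_subset_Icc_self hb) hab
  exact div_lt_div_of_pos_right (strictAntiOn_psi (sqrt_one_sub_four_mul_sq_mem_Ioo hb.1 hb.2)
    (sqrt_one_sub_four_mul_sq_mem_Ioo ha.1 ha.2) hlt) (log_pos one_lt_two)
end

section
/- For all reals x, y > 0 and all p, q with 0 < q ≤ p < 1, the following identity holds: (1 − q/p)·((1−p)x + p·y)·hₑ(p·y/((1−p)x + p·y)) + ∫_p^1 (2pq/ℓ³)·((1−ℓ)x + ℓ·y)·hₑ(ℓ·y/((1−ℓ)x + ℓ·y)) dℓ = −( q·(1−p)·y + (1−p)·(1−q)·x·ln((1−p)·x/((1−p)x + p·y)) + (p·q·y²/x + (p + q − 2pq)·y)·ln(p·y/((1−p)x + p·y)) ), where ln denotes the natural logarithm. -/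
/-!
Writing `S ℓ = (1 - ℓ) x + ℓ y`, the integrand `S ℓ · hₑ(ℓ y / S ℓ) / ℓ³` has an elementary
primitive vanishing at `ℓ = 1`. Its derivative blows up at `1` (through `log (1 - ℓ)`), but
the primitive itself stays continuous there, so the fundamental theorem of calculus on `[p, 1]`
evaluates the integral, and the rest is field arithmetic in the two logarithms
`log ((1 - p) x / S p)` and `log (p y / S p)`.
-/

/-- The natural-log binary entropy `hₑ(t) = −t·ln t − (1−t)·ln(1−t)`,
with the convention `0 · ln 0 = 0`. -/
noncomputable def natEnt (t : ℝ) : ℝ :=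
  -(t * Real.log t) - (1 - t) * Real.log (1 - t)

open Real Set

lemma natEnt_eq_binEntropy : natEnt = binEntropy := by
  ext t
  simp only [natEnt, binEntropy, log_inv]
  ring

lemma continuous_natEnt : Continuous natEnt := natEnt_eq_binEntropy ▸ binEntropy_continuous

section

variable {x y : ℝ}

lemma one_sub_mul_add_mul_pos (hx : 0 < x) (hy : 0 < y) {l : ℝ} (h0 : 0 < l) (h1 : l ≤ 1) :
    0 < (1 - l) * x + l * y := by
  nlinarith

/-- Obtained by solving the claimed identity for the integral: with `S = (1 - p) x + p y`,
`(RHS - (1 - q/p) S hₑ(p y / S)) / (2 p q)` does not depend on `q`. -/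
noncomputable def andCostPrimitive (x y l : ℝ) : ℝ :=
  ((1 - l) * y / l + ((1 - l) / l) ^ 2 * x * log ((1 - l) * x / ((1 - l) * x + l * y))
    + (y ^ 2 / x + 2 * y * (1 - l) / l) * log (l * y / ((1 - l) * x + l * y))) / 2

lemma andCostPrimitive_one : andCostPrimitive x y 1 = 0 := by
  simp [andCostPrimitive]

lemma hasDerivAt_andCostPrimitive (hx : 0 < x) (hy : 0 < y) {l : ℝ} (h0 : 0 < l)
    (h1 : l < 1) :
    HasDerivAt (andCostPrimitive x y)
      (((1 - l) * x + l * y) * natEnt (l * y / ((1 - l) * x + l * y)) / l ^ 3) l := by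
  have hS := one_sub_mul_add_mul_pos hx hy h0 h1.le
  have h1l : 0 < 1 - l := sub_pos.2 h1
  have hone : HasDerivAt (fun l : ℝ => 1 - l) (-1) l := by
    simpa using (hasDerivAt_id l).const_sub 1
  have hmix : HasDerivAt (fun l : ℝ => (1 - l) * x + l * y) (-1 * x + 1 * y) l :=
    (hone.mul_const x).add ((hasDerivAt_id l).mul_const y)
  have hlogX := ((hone.mul_const x).div hmix hS.ne').log (div_pos (mul_pos h1l hx) hS).ne'
  have hlogY :=
    (((hasDerivAt_id l).mul_const y).div hmix hS.ne').log (div_pos (mul_pos h0 hy) hS).ne'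
  have hratio := hone.div (hasDerivAt_id l) h0.ne'
  have key : HasDerivAt (andCostPrimitive x y) _ l :=
    ((((hone.mul_const y).div (hasDerivAt_id l) h0.ne').add
      (((hratio.pow 2).mul_const x).mul hlogX)).add
      ((((hone.const_mul (2 * y)).div (hasDerivAt_id l) h0.ne').const_add (y ^ 2 / x)).mul
        hlogY)).div_const 2
  refine key.congr_deriv ?_
  unfold natEnt
  rw [one_sub_div hS.ne', show (1 - l) * x + l * y - l * y = (1 - l) * x by ring]
  simp only [id, Pi.div_apply, Pi.pow_apply, Nat.reduceSub, pow_one]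
  field_simp
  ring

lemma continuousOn_andCostPrimitive (hx : 0 < x) (hy : 0 < y) {p : ℝ} (hp : 0 < p) :
    ContinuousOn (andCostPrimitive x y) (Icc p 1) := by
  have hl0 : ∀ l ∈ Icc p 1, l ≠ 0 := fun l hl => (hp.trans_le hl.1).ne'
  have hl2 : ∀ l ∈ Icc p 1, l ^ 2 ≠ 0 := fun l hl => pow_ne_zero 2 (hl0 l hl)
  have hS : ∀ l ∈ Icc p 1, (1 - l) * x + l * y ≠ 0 := fun l hl =>
    (one_sub_mul_add_mul_pos hx hy (hp.trans_le hl.1) hl.2).ne'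
  have hB : ∀ l ∈ Icc p 1, l * y / ((1 - l) * x + l * y) ≠ 0 := fun l hl =>
    div_ne_zero (mul_ne_zero (hl0 l hl) hy.ne') (hS l hl)
  -- `(1 - l)² log (1 - l)` is continuous at `l = 1` as `(1 - l) · (w log w)`
  have hmulLog :
      EqOn (fun l => ((1 - l) / l) ^ 2 * x * log ((1 - l) * x / ((1 - l) * x + l * y)))
      (fun l => (1 - l) / l ^ 2 * ((1 - l) * x + l * y) * ((1 - l) * x / ((1 - l) * x + l * y)
        * log ((1 - l) * x / ((1 - l) * x + l * y)))) (Icc p 1) := by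
    intro l hl'
    field_simp [hl0 l hl', hS l hl']
  refine ContinuousOn.div_const (ContinuousOn.add (ContinuousOn.add ?_ ?_) ?_) 2
  · fun_prop (disch := assumption)
  · refine ContinuousOn.congr ?_ hmulLog
    have hw : ContinuousOn (fun l => (1 - l) * x / ((1 - l) * x + l * y)) (Icc p 1) := by
      fun_prop (disch := assumption)
    exact ContinuousOn.mul (by fun_prop (disch := assumption))
      (continuous_mul_log.comp_continuousOn hw)
  · fun_prop (disch := assumption)

lemma integral_mul_natEnt_div_cube (hx : 0 < x) (hy : 0 < y) {p : ℝ} (hp0 : 0 < p)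
    (hp1 : p ≤ 1) :
    ∫ ℓ in p..1, ((1 - ℓ) * x + ℓ * y) * natEnt (ℓ * y / ((1 - ℓ) * x + ℓ * y)) / ℓ ^ 3
      = -andCostPrimitive x y p := by
  have hint : ContinuousOn
      (fun ℓ => ((1 - ℓ) * x + ℓ * y) * natEnt (ℓ * y / ((1 - ℓ) * x + ℓ * y)) / ℓ ^ 3)
      (uIcc p 1) := by
    rw [uIcc_of_le hp1]
    have hS : ∀ l ∈ Icc p 1, (1 - l) * x + l * y ≠ 0 := fun l hl =>
      (one_sub_mul_add_mul_pos hx hy (hp0.trans_le hl.1) hl.2).ne'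
    have hl3 : ∀ l ∈ Icc p 1, l ^ 3 ≠ 0 := fun l hl =>
      pow_ne_zero 3 (hp0.trans_le hl.1).ne'
    have := continuous_natEnt
    fun_prop (disch := assumption)
  rw [intervalIntegral.integral_eq_sub_of_hasDerivAt_of_le hp1
    (continuousOn_andCostPrimitive hx hy hp0)
    (fun l hl => hasDerivAt_andCostPrimitive hx hy (hp0.trans hl.1) hl.2)
    hint.intervalIntegrable, andCostPrimitive_one, zero_sub]

end

/-- Closed form for the scaled information cost of the buzzer protocol for AND. -/
theorem stmt_10 (x y p q : ℝ) (hx : 0 < x) (hy : 0 < y)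
    (hq : 0 < q) (hqp : q ≤ p) (hp : p < 1) :
    (1 - q / p) * ((1 - p) * x + p * y) * natEnt (p * y / ((1 - p) * x + p * y))
      + ∫ ℓ in p..1,
          (2 * p * q / ℓ ^ 3) * ((1 - ℓ) * x + ℓ * y) * natEnt (ℓ * y / ((1 - ℓ) * x + ℓ * y))
    = -(q * (1 - p) * y
        + (1 - p) * (1 - q) * x * Real.log ((1 - p) * x / ((1 - p) * x + p * y))
        + (p * q * y ^ 2 / x + (p + q - 2 * p * q) * y)
            * Real.log (p * y / ((1 - p) * x + p * y))) := by
  have hp0 : 0 < p := hq.trans_le hqp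
  have hS := one_sub_mul_add_mul_pos hx hy hp0 hp.le
  have hintegral : ∫ ℓ in p..1,
      (2 * p * q / ℓ ^ 3) * ((1 - ℓ) * x + ℓ * y) * natEnt (ℓ * y / ((1 - ℓ) * x + ℓ * y))
      = 2 * p * q * -andCostPrimitive x y p := by
    rw [← integral_mul_natEnt_div_cube hx hy hp0 hp.le, ← intervalIntegral.integral_const_mul]
    congr 1 with ℓ
    ring
  rw [hintegral, andCostPrimitive, natEnt, one_sub_div hS.ne',
    show (1 - p) * x + p * y - p * y = (1 - p) * x by ring]
  field_simp
  ring
end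

section
/- Fix reals x, y > 0 and q ∈ (0,1), and define G : (0,1) → ℝ by G(p) = −( q·(1−p)·y + (1−p)·(1−q)·x·ln((1−p)·x/A(p)) + (p·q·y²/x + (p + q − 2pq)·y)·ln(p·y/A(p)) ), where A(p) = (1−p)·x + p·y and ln is the natural logarithm. Then G is twice differentiable on the interval (q,1), and for every p ∈ (q,1) its second derivative satisfies G″(p) = −(p − q)·x·y/((1−p)·p²·A(p)). -/
/-!
With `A(t) = (1-t)x + ty`, the two logarithms have the simple derivatives
`(log ((1-t)x/A))' = -y/((1-t)A)` and `(log (ty/A))' = x/(tA)`. In the product rule for `G'` the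
terms where these derivatives multiply the affine coefficients collapse to `qy/t`, so
`G' = qy - qy/t + (1-q)x log((1-t)x/A) - (qy²/x + (1-2q)y) log(ty/A)`, whose derivative is a
rational function that simplifies to the stated one.
-/

open Set Filter

theorem hasDerivAt_deriv_of_forall_hasDerivAt {𝕜 F : Type*} [NontriviallyNormedField 𝕜]
    [NormedAddCommGroup F] [NormedSpace 𝕜 F] {f f' : 𝕜 → F} {f'' : F} {s : Set 𝕜} {p : 𝕜}
    (hs : IsOpen s) (hf : ∀ t ∈ s, HasDerivAt f (f' t) t) (hp : p ∈ s)
    (hf' : HasDerivAt f' f'' p) : HasDerivAt (deriv f) f'' p :=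
  hf'.congr_of_eventuallyEq (eventually_of_mem (hs.mem_nhds hp) fun t ht => (hf t ht).deriv)

theorem HasDerivAt.log_div {f g : ℝ → ℝ} {f' g' t : ℝ} (hf : HasDerivAt f f' t)
    (hg : HasDerivAt g g' t) (hft : f t ≠ 0) (hgt : g t ≠ 0) :
    HasDerivAt (fun s => Real.log (f s / g s)) (f' / f t - g' / g t) t := by
  refine ((hf.fun_div hg hgt).log (div_ne_zero hft hgt)).congr_deriv ?_
  field_simp

namespace Buzzer

variable {x y t : ℝ}

theorem hasDerivAt_mix (x y t : ℝ) : HasDerivAt (fun s => (1 - s) * x + s * y) (y - x) t :=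
  ((((hasDerivAt_id' t).const_sub 1).mul_const x).add
    ((hasDerivAt_id' t).mul_const y)).congr_deriv (by ring)

theorem hasDerivAt_log_left_div_mix (hx : x ≠ 0) (ht : 1 - t ≠ 0)
    (hA : (1 - t) * x + t * y ≠ 0) :
    HasDerivAt (fun s => Real.log ((1 - s) * x / ((1 - s) * x + s * y)))
      (-y / ((1 - t) * ((1 - t) * x + t * y))) t := by
  have hu : HasDerivAt (fun s => (1 - s) * x) (-x) t := by
    simpa using ((hasDerivAt_id' t).const_sub 1).mul_const x
  refine (hu.log_div (hasDerivAt_mix x y t) (mul_ne_zero ht hx) hA).congr_deriv ?_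
  rw [div_sub_div _ _ (mul_ne_zero ht hx) hA,
    div_eq_div_iff (mul_ne_zero (mul_ne_zero ht hx) hA) (mul_ne_zero ht hA)]
  ring

theorem hasDerivAt_log_right_div_mix (hy : y ≠ 0) (ht : t ≠ 0)
    (hA : (1 - t) * x + t * y ≠ 0) :
    HasDerivAt (fun s => Real.log (s * y / ((1 - s) * x + s * y)))
      (x / (t * ((1 - t) * x + t * y))) t := by
  have hu : HasDerivAt (fun s => s * y) y t := by simpa using (hasDerivAt_id' t).mul_const y
  refine (hu.log_div (hasDerivAt_mix x y t) (mul_ne_zero ht hy) hA).congr_deriv ?_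
  rw [div_sub_div _ _ (mul_ne_zero ht hy) hA,
    div_eq_div_iff (mul_ne_zero (mul_ne_zero ht hy) hA) (mul_ne_zero ht hA)]
  ring

noncomputable def cost (x y q p : ℝ) : ℝ :=
  -(q * (1 - p) * y
    + (1 - p) * (1 - q) * x * Real.log ((1 - p) * x / ((1 - p) * x + p * y))
    + (p * q * y ^ 2 / x + (p + q - 2 * p * q) * y) * Real.log (p * y / ((1 - p) * x + p * y)))

noncomputable def costDeriv (x y q p : ℝ) : ℝ :=
  q * y - q * y / p + (1 - q) * x * Real.log ((1 - p) * x / ((1 - p) * x + p * y))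
    - (q * y ^ 2 / x + (1 - 2 * q) * y) * Real.log (p * y / ((1 - p) * x + p * y))

variable {q : ℝ}

theorem mix_pos (hx : 0 < x) (hy : 0 < y) (ht₀ : 0 < t) (ht₁ : t < 1) :
    0 < (1 - t) * x + t * y := by
  nlinarith

theorem hasDerivAt_cost (hx : 0 < x) (hy : 0 < y) (ht₀ : 0 < t) (ht₁ : t < 1) :
    HasDerivAt (cost x y q) (costDeriv x y q t) t := by
  have hA := mix_pos hx hy ht₀ ht₁
  have hℓ₁ := hasDerivAt_log_left_div_mix hx.ne' (sub_pos.2 ht₁).ne' hA.ne'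
  have hℓ₂ := hasDerivAt_log_right_div_mix (x := x) hy.ne' ht₀.ne' hA.ne'
  have hc : HasDerivAt (fun s => q * (1 - s) * y) (-(q * y)) t :=
    (((hasDerivAt_id' t).const_sub 1).const_mul q).mul_const y |>.congr_deriv (by ring)
  have ha : HasDerivAt (fun s => (1 - s) * (1 - q) * x) (-((1 - q) * x)) t :=
    (((hasDerivAt_id' t).const_sub 1).mul_const (1 - q)).mul_const x |>.congr_deriv (by ring)
  have hb : HasDerivAt (fun s => s * q * y ^ 2 / x + (s + q - 2 * s * q) * y)
      (q * y ^ 2 / x + (1 - 2 * q) * y) t :=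
    ((((hasDerivAt_id' t).mul_const q).mul_const (y ^ 2)).div_const x).add
      ((((hasDerivAt_id' t).add_const q).sub
        (((hasDerivAt_id' t).const_mul 2).mul_const q)).mul_const y) |>.congr_deriv (by ring)
  have hcollapse : (1 - t) * (1 - q) * x * (-y / ((1 - t) * ((1 - t) * x + t * y)))
      + (t * q * y ^ 2 / x + (t + q - 2 * t * q) * y) * (x / (t * ((1 - t) * x + t * y)))
      = q * y / t := by
    have ht : 1 - t ≠ 0 := (sub_pos.2 ht₁).ne'
    field_simp
    ring
  refine ((hc.add (ha.mul hℓ₁)).add (hb.mul hℓ₂)).neg.congr_deriv ?_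
  rw [costDeriv]
  linear_combination -hcollapse

theorem hasDerivAt_costDeriv (hx : 0 < x) (hy : 0 < y) (ht₀ : 0 < t) (ht₁ : t < 1) :
    HasDerivAt (costDeriv x y q)
      (-((t - q) * x * y / ((1 - t) * t ^ 2 * ((1 - t) * x + t * y)))) t := by
  have hA := mix_pos hx hy ht₀ ht₁
  have hℓ₁ := hasDerivAt_log_left_div_mix hx.ne' (sub_pos.2 ht₁).ne' hA.ne'
  have hℓ₂ := hasDerivAt_log_right_div_mix (x := x) hy.ne' ht₀.ne' hA.ne'
  have hinv : HasDerivAt (fun s => q * y / s) (-(q * y) / t ^ 2) t := by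
    simpa [div_eq_mul_inv] using (hasDerivAt_inv ht₀.ne').const_mul (q * y)
  refine ((((hasDerivAt_const t (q * y)).sub hinv).add (hℓ₁.const_mul ((1 - q) * x))).sub
    (hℓ₂.const_mul (q * y ^ 2 / x + (1 - 2 * q) * y))).congr_deriv ?_
  have ht : 1 - t ≠ 0 := (sub_pos.2 ht₁).ne'
  have hA' := hA.ne'
  generalize hB : (1 - t) * x + t * y = A at hA' ⊢
  field_simp
  subst hB
  ring

end Buzzer

theorem stmt_11_general (x y q : ℝ) (hx : 0 < x) (hy : 0 < y) (hq0 : 0 < q) :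
    let A : ℝ → ℝ := fun p => (1 - p) * x + p * y
    let G : ℝ → ℝ := fun p =>
      -(q * (1 - p) * y
        + (1 - p) * (1 - q) * x * Real.log ((1 - p) * x / A p)
        + (p * q * y ^ 2 / x + (p + q - 2 * p * q) * y) * Real.log (p * y / A p))
    (∀ p ∈ Set.Ioo q 1, DifferentiableAt ℝ G p ∧ DifferentiableAt ℝ (deriv G) p) ∧
    (∀ p ∈ Set.Ioo q 1,
      deriv (deriv G) p = -((p - q) * x * y / ((1 - p) * p ^ 2 * A p))) := by
  intro A G
  have hsub : Ioo q 1 ⊆ Ioo 0 1 := fun p hp => ⟨hq0.trans hp.1, hp.2⟩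
  have h₁ : ∀ p ∈ Ioo (0 : ℝ) 1, HasDerivAt G (Buzzer.costDeriv x y q p) p :=
    fun p hp => Buzzer.hasDerivAt_cost hx hy hp.1 hp.2
  have h₂ : ∀ p ∈ Ioo q 1, HasDerivAt (deriv G)
      (-((p - q) * x * y / ((1 - p) * p ^ 2 * A p))) p := fun p hp =>
    hasDerivAt_deriv_of_forall_hasDerivAt isOpen_Ioo h₁ (hsub hp)
      (Buzzer.hasDerivAt_costDeriv hx hy (hsub hp).1 hp.2)
  exact ⟨fun p hp => ⟨(h₁ p (hsub hp)).differentiableAt, (h₂ p hp).differentiableAt⟩,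
    fun p hp => (h₂ p hp).deriv⟩

/-- The closed-form scaled information cost `G(p)` of the buzzer protocol is twice
differentiable on `(q,1)`, with `G″(p) = −(p − q)·x·y/((1−p)·p²·A(p))` there. -/
theorem stmt_11 (x y q : ℝ) (hx : 0 < x) (hy : 0 < y) (hq0 : 0 < q) (hq1 : q < 1) :
    let A : ℝ → ℝ := fun p => (1 - p) * x + p * y
    let G : ℝ → ℝ := fun p =>
      -(q * (1 - p) * y
        + (1 - p) * (1 - q) * x * Real.log ((1 - p) * x / A p)
        + (p * q * y ^ 2 / x + (p + q - 2 * p * q) * y) * Real.log (p * y / A p))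
    (∀ p ∈ Set.Ioo q 1, DifferentiableAt ℝ G p ∧ DifferentiableAt ℝ (deriv G) p) ∧
    (∀ p ∈ Set.Ioo q 1,
      deriv (deriv G) p = -((p - q) * x * y / ((1 - p) * p ^ 2 * A p))) :=
  stmt_11_general x y q hx hy hq0
end

section
/- Fix reals q, c with 0 < q < c ≤ 1, and define Ψ(p) = (1 − q/p)·(c − p)² + 2pq·∫_p^c ((c − ℓ)²/ℓ³) dℓ for p ∈ (q, c). Then Ψ is twice differentiable on (q, c), and its second derivative satisfies Ψ″(p) = 2·(1 − q/p) for every p ∈ (q, c). -/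
/-!
Both derivatives come from the product rule and the fundamental theorem of calculus at the lower
limit, `d/dp ∫_p^c g = -g p` for `g ℓ = (c - ℓ)² / ℓ³`. This gives
`Ψ' p = -(q/p²)(c - p)² - 2(1 - q/p)(c - p) + 2q ∫_p^c g`; differentiating again, the term
`-2q g p` from the integral cancels the `(c - p)²` term and the two `(c - p)` terms cancel,
leaving `2(1 - q/p)`.
-/

open Set Filter

theorem ContinuousOn.integral_hasDerivAt_left {E : Type*} [NormedAddCommGroup E]
    [NormedSpace ℝ E] [CompleteSpace E] {f : ℝ → E} {s : Set ℝ} {a b : ℝ}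
    (hs : IsOpen s) (hf : ContinuousOn f s) (hab : uIcc a b ⊆ s) :
    HasDerivAt (fun x => ∫ t in x..b, f t) (-f a) a := by
  have ha : a ∈ s := hab left_mem_uIcc
  exact intervalIntegral.integral_hasDerivAt_left (hf.mono hab).intervalIntegrable
    (hf.stronglyMeasurableAtFilter hs a ha) (hf.continuousAt (hs.mem_nhds ha))

theorem hasDerivAt_deriv_of_forall_mem {𝕜 F : Type*} [NontriviallyNormedField 𝕜]
    [NormedAddCommGroup F] [NormedSpace 𝕜 F] {f f' : 𝕜 → F} {s : Set 𝕜} {x : 𝕜} {f'' : F}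
    (hs : IsOpen s) (hf : ∀ y ∈ s, HasDerivAt f (f' y) y) (hx : x ∈ s)
    (hf' : HasDerivAt f' f'' x) : HasDerivAt (deriv f) f'' x :=
  hf'.congr_of_eventuallyEq <| eventually_of_mem (hs.mem_nhds hx) fun y hy => (hf y hy).deriv

noncomputable section

namespace BuzzerPotential

variable (q c : ℝ)

def tail (p : ℝ) : ℝ := ∫ ℓ in p..c, (c - ℓ) ^ 2 / ℓ ^ 3

def potential (p : ℝ) : ℝ := (1 - q / p) * (c - p) ^ 2 + 2 * p * q * tail c p

def potentialDeriv (p : ℝ) : ℝ :=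
  -(q / p ^ 2) * (c - p) ^ 2 - 2 * (1 - q / p) * (c - p) + 2 * q * tail c p

variable {q c} {p : ℝ}

theorem hasDerivAt_tail (hp : 0 < p) (hc : 0 < c) :
    HasDerivAt (tail c) (-((c - p) ^ 2 / p ^ 3)) p := by
  have hcont : ContinuousOn (fun ℓ : ℝ => (c - ℓ) ^ 2 / ℓ ^ 3) (Ioi 0) :=
    ContinuousOn.div (by fun_prop) (by fun_prop) fun ℓ hℓ => pow_ne_zero 3 (ne_of_gt hℓ)
  exact hcont.integral_hasDerivAt_left isOpen_Ioi fun ℓ hℓ => (lt_min hp hc).trans_le hℓ.1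

theorem hasDerivAt_one_sub_div (hp : p ≠ 0) :
    HasDerivAt (fun x => 1 - q / x) (q / p ^ 2) p :=
  (((hasDerivAt_const p q).div (hasDerivAt_id' p) hp).const_sub 1).congr_deriv (by ring)

theorem hasDerivAt_potential (hp : 0 < p) (hc : 0 < c) :
    HasDerivAt (potential q c) (potentialDeriv q c p) p := by
  refine (((hasDerivAt_one_sub_div hp.ne').mul (((hasDerivAt_id' p).const_sub c).fun_pow 2)).add
    ((((hasDerivAt_id' p).const_mul 2).mul_const q).mul (hasDerivAt_tail hp hc))).congr_deriv ?_
  simp only [potentialDeriv]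
  field_simp
  ring

theorem hasDerivAt_potentialDeriv (hp : 0 < p) (hc : 0 < c) :
    HasDerivAt (potentialDeriv q c) (2 * (1 - q / p)) p := by
  have hsq : HasDerivAt (fun x => -(q / x ^ 2)) (2 * q / p ^ 3) p :=
    ((hasDerivAt_const p q).div ((hasDerivAt_id' p).fun_pow 2) (pow_ne_zero 2 hp.ne')).neg
      |>.congr_deriv (by field_simp; ring)
  refine (((hsq.mul (((hasDerivAt_id' p).const_sub c).fun_pow 2)).sub
    (((hasDerivAt_one_sub_div hp.ne').const_mul 2).mul ((hasDerivAt_id' p).const_sub c))).add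
    ((hasDerivAt_tail hp hc).const_mul (2 * q))).congr_deriv ?_
  field_simp
  ring

end BuzzerPotential

end

open BuzzerPotential in
theorem stmt_12_general (q c : ℝ) (hq : 0 < q) :
    let Ψ : ℝ → ℝ := fun p =>
      (1 - q / p) * (c - p) ^ 2 + 2 * p * q * ∫ ℓ in p..c, (c - ℓ) ^ 2 / ℓ ^ 3
    (∀ p ∈ Set.Ioo q c, DifferentiableAt ℝ Ψ p ∧ DifferentiableAt ℝ (deriv Ψ) p) ∧
    (∀ p ∈ Set.Ioo q c, deriv (deriv Ψ) p = 2 * (1 - q / p)) := by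
  intro Ψ
  have hpos : ∀ p ∈ Ioo q c, 0 < p ∧ 0 < c := fun p hp =>
    ⟨hq.trans hp.1, hq.trans (hp.1.trans hp.2)⟩
  have hΨ' : ∀ p ∈ Ioo q c, HasDerivAt Ψ (potentialDeriv q c p) p := fun p hp =>
    hasDerivAt_potential (hpos p hp).1 (hpos p hp).2
  have hΨ'' : ∀ p ∈ Ioo q c, HasDerivAt (deriv Ψ) (2 * (1 - q / p)) p := fun p hp =>
    hasDerivAt_deriv_of_forall_mem isOpen_Ioo hΨ' hp
      (hasDerivAt_potentialDeriv (hpos p hp).1 (hpos p hp).2)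
  exact ⟨fun p hp => ⟨(hΨ' p hp).differentiableAt, (hΨ'' p hp).differentiableAt⟩,
    fun p hp => (hΨ'' p hp).deriv⟩

/-- The closed-form potential `Ψ(p) = Φ_{c,(p,q)}` of the buzzer protocol is twice
differentiable on `(q,c)`, with `Ψ″(p) = 2·(1 − q/p)` there. -/
theorem stmt_12 (q c : ℝ) (hq : 0 < q) (hqc : q < c) (hc1 : c ≤ 1) :
    let Ψ : ℝ → ℝ := fun p =>
      (1 - q / p) * (c - p) ^ 2 + 2 * p * q * ∫ ℓ in p..c, (c - ℓ) ^ 2 / ℓ ^ 3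
    (∀ p ∈ Set.Ioo q c, DifferentiableAt ℝ Ψ p ∧ DifferentiableAt ℝ (deriv Ψ) p) ∧
    (∀ p ∈ Set.Ioo q c, deriv (deriv Ψ) p = 2 * (1 - q / p)) :=
  stmt_12_general q c hq
end

section
/- For every real M ≥ 1 there exists ε₀ ∈ (0,1/2) such that for all ε ∈ (0, ε₀] and all κ with ε ≤ κ ≤ 1: if κ ≤ M·( κ·h(√(ε/κ)) + h(ε) ), then κ ≤ 2M·h(ε). -/
lemma binEnt_eq (x : ℝ) : binEnt x = Real.binEntropy x / Real.log 2 := by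
  unfold binEnt Real.binEntropy Real.logb
  rw [Real.log_inv, Real.log_inv]
  ring

/-- For every `M ≥ 1` there is `ε₀ ∈ (0,1/2)` such that for all `ε ∈ (0,ε₀]` and all
`κ ∈ [ε,1]`: if `κ ≤ M·(κ·h(√(ε/κ)) + h(ε))`, then `κ ≤ 2M·h(ε)`. -/
theorem stmt_16 (M : ℝ) (hM : 1 ≤ M) :
    ∃ ε₀ : ℝ, 0 < ε₀ ∧ ε₀ < 1 / 2 ∧
      ∀ ε : ℝ, 0 < ε → ε ≤ ε₀ → ∀ κ : ℝ, ε ≤ κ → κ ≤ 1 →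
        κ ≤ M * (κ * binEnt (Real.sqrt (ε / κ)) + binEnt ε) →
        κ ≤ 2 * M * binEnt ε := by
  have hM0 : 0 < M := lt_of_lt_of_le one_pos hM
  have hlog2 : (0:ℝ) < Real.log 2 := Real.log_pos (by norm_num)
  -- pick δ ∈ (0, 1/4] with binEntropy δ < log 2 / (2M)
  have hcont : ContinuousAt Real.binEntropy 0 := Real.binEntropy_continuous.continuousAt
  have hc : (0:ℝ) < Real.log 2 / (2 * M) := by positivity
  obtain ⟨r, hr0, hr⟩ := Metric.continuousAt_iff.mp hcont _ hc
  set δ : ℝ := min (r / 2) (1/4) with hδdef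
  have hδ0 : 0 < δ := lt_min (by linarith) (by norm_num)
  have hδ4 : δ ≤ 1/4 := min_le_right _ _
  have hδr : δ < r := lt_of_le_of_lt (min_le_left _ _) (by linarith)
  have hδsmall : Real.binEntropy δ < Real.log 2 / (2 * M) := by
    have := hr (x := δ) (by
      simp only [Real.dist_eq, sub_zero]
      rw [abs_of_pos hδ0]; exact hδr)
    simp only [Real.dist_eq, Real.binEntropy_zero, sub_zero] at this
    calc Real.binEntropy δ ≤ |Real.binEntropy δ| := le_abs_self _
    _ < _ := this
  set ε₀ : ℝ := min (1/4) ((2:ℝ) ^ (-(1/(2*δ^2))) : ℝ) with hε₀def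
  refine ⟨ε₀, lt_min (by norm_num) (Real.rpow_pos_of_pos two_pos _), lt_of_le_of_lt (min_le_left _ _) (by norm_num), ?_⟩
  intro ε hε0 hεε₀ κ hεκ hκ1 hyp
  by_contra hcon
  push_neg at hcon
  have hε1 : ε < 1 := lt_of_le_of_lt (hεε₀.trans (min_le_left _ _)) (by norm_num)
  have hκ0 : 0 < κ := lt_of_lt_of_le hε0 hεκ
  -- binEnt ε ≥ -ε * logb 2 ε > 0
  have hlogbε : Real.logb 2 ε < 0 := Real.logb_neg (by norm_num) hε0 hε1
  have h1ε : Real.logb 2 (1 - ε) ≤ 0 :=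
    Real.logb_nonpos (by norm_num) (by linarith) (by linarith)
  have hbinEntε : ε * (-Real.logb 2 ε) ≤ binEnt ε := by
    unfold binEnt; nlinarith
  have hL : 1/(2*δ^2) ≤ -Real.logb 2 ε := by
    have : ε ≤ (2:ℝ) ^ (-(1/(2*δ^2))) := hεε₀.trans (min_le_right _ _)
    have h2 : Real.logb 2 ε ≤ Real.logb 2 ((2:ℝ) ^ (-(1/(2*δ^2)))) :=
      Real.logb_le_logb_of_le (by norm_num) hε0 this
    rw [Real.logb_rpow (by norm_num) (by norm_num)] at h2
    linarith
  set L : ℝ := -Real.logb 2 ε with hLdef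
  have hL0 : 0 < L := by
    have : 0 < 1/(2*δ^2) := by positivity
    linarith
  -- κ > 2M·binEnt ε ≥ 2M·ε·L
  have hκbig : 2 * M * (ε * L) < κ := by
    have : 2 * M * (ε * L) ≤ 2 * M * binEnt ε := by
      apply mul_le_mul_of_nonneg_left hbinEntε (by positivity)
    linarith
  -- so ε/κ < δ²
  have hδ2L : 1 ≤ 2 * δ^2 * L := by
    rw [div_le_iff₀ (by positivity : (0:ℝ) < 2*δ^2)] at hL
    linarith
  have htlt : ε / κ < δ^2 := by
    rw [div_lt_iff₀ hκ0]
    have h2 : δ^2 * (2 * M * (ε * L)) < δ^2 * κ :=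
      mul_lt_mul_of_pos_left hκbig (by positivity)
    have h3 : ε ≤ δ^2 * (2 * M * (ε * L)) := by
      have : δ^2 * (2 * M * (ε * L)) = ε * (M * (2 * δ^2 * L)) := by ring
      rw [this]
      have hprod : 1 ≤ M * (2 * δ^2 * L) := by nlinarith [hM, hδ2L]
      exact le_mul_of_one_le_right hε0.le hprod
    linarith
  have hsqrt : Real.sqrt (ε / κ) ≤ δ := by
    rw [show δ = Real.sqrt (δ^2) by rw [Real.sqrt_sq hδ0.le]]
    exact Real.sqrt_le_sqrt htlt.le
  have hsq0 : 0 ≤ Real.sqrt (ε / κ) := Real.sqrt_nonneg _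
  -- binEnt(√(ε/κ)) < 1/(2M)
  have hmono : Real.binEntropy (Real.sqrt (ε / κ)) ≤ Real.binEntropy δ := by
    rcases eq_or_lt_of_le hsqrt with h | h
    · rw [h]
    · have hδhalf : δ ≤ 2⁻¹ := by linarith
      exact (Real.binEntropy_strictMonoOn
        ⟨hsq0, hsqrt.trans hδhalf⟩ ⟨hδ0.le, hδhalf⟩ h).le
  have hbElt : binEnt (Real.sqrt (ε / κ)) < 1 / (2 * M) := by
    rw [binEnt_eq, div_lt_div_iff₀ hlog2 (by positivity)]
    calc Real.binEntropy (Real.sqrt (ε/κ)) * (2*M)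
        ≤ Real.binEntropy δ * (2*M) := by
          apply mul_le_mul_of_nonneg_right hmono (by positivity)
      _ < (Real.log 2 / (2*M)) * (2*M) := by
          apply mul_lt_mul_of_pos_right hδsmall (by positivity)
      _ = 1 * Real.log 2 := by field_simp
  -- derive contradiction
  have hsplit : κ ≤ M * (κ * binEnt (Real.sqrt (ε / κ))) + M * binEnt ε := by
    have := mul_add M (κ * binEnt (Real.sqrt (ε / κ))) (binEnt ε)
    linarith
  have h4 : M * binEnt ε < κ / 2 := by linarith
  have h5 : M * (κ * binEnt (Real.sqrt (ε / κ))) < κ / 2 := by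
    have h6 : κ * binEnt (Real.sqrt (ε / κ)) < κ * (1 / (2*M)) :=
      mul_lt_mul_of_pos_left hbElt hκ0
    have h7 : M * (κ * binEnt (Real.sqrt (ε / κ))) < M * (κ * (1 / (2*M))) :=
      mul_lt_mul_of_pos_left h6 hM0
    have h8 : M * (κ * (1 / (2*M))) = κ / 2 := by field_simp
    linarith
  linarith
end

section
/- For all reals x, y > 0, there exists a constant C > 0 (one may take C = 2·max_{p∈[0,1]} (1−p)·p·((1−p)x + p·y)/(x·y)) such that for all q, c with 0 < q < c < 1, the function p ↦ C·G(p) + (1 − q/p)·(c − p)² + 2pq·∫_p^c ((c − ℓ)²/ℓ³) dℓ is concave on the interval [q, c], where G(p) = −( q·(1−p)·y + (1−p)·(1−q)·x·ln((1−p)·x/A(p)) + (p·q·y²/x + (p + q − 2pq)·y)·ln(p·y/A(p)) ) with A(p) = (1−p)·x + p·y and ln the natural logarithm. -/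
/-!
Write `A = (1 - p) x + p y`. Both logarithms have elementary derivatives, `-y / ((1 - p) A)` and
`x / (p A)`, so that `G'' = -(p - q) x y / (p² (1 - p) A)`; differentiating the integral in its
lower limit gives `Φ'' = 2 (1 - q / p)`. Hence the second derivative of `C G + Φ` is
`(1 - q / p) (2 - C x y / (p (1 - p) A))`, which is nonpositive for `p ≥ q` as soon as
`C x y ≥ 2 p (1 - p) A`; since `p (1 - p) ≤ 1/4` and `A ≤ x + y`, the constant
`C = (x + y) / (x y)` works.
-/

open Real Set

theorem concaveOn_Icc_of_hasDerivAt2_nonpos {f f' f'' : ℝ → ℝ} {a b : ℝ}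
    (hf : ∀ t ∈ Icc a b, HasDerivAt f (f' t) t) (hf' : ∀ t ∈ Ioo a b, HasDerivAt f' (f'' t) t)
    (hf'' : ∀ t ∈ Ioo a b, f'' t ≤ 0) : ConcaveOn ℝ (Icc a b) f := by
  refine concaveOn_of_hasDerivWithinAt2_nonpos (f' := f') (f'' := f'') (convex_Icc a b)
    (fun t ht => (hf t ht).continuousAt.continuousWithinAt) ?_ ?_ ?_ <;> rw [interior_Icc]
  · exact fun t ht => (hf t (Ioo_subset_Icc_self ht)).hasDerivWithinAt
  · exact fun t ht => (hf' t ht).hasDerivWithinAt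
  · exact hf''

section Cost

variable {x y q p : ℝ}

theorem hasDerivAt_log_one_sub_mul_div (hx : x ≠ 0) (hp : 1 - p ≠ 0)
    (hA : (1 - p) * x + p * y ≠ 0) :
    HasDerivAt (fun p => log ((1 - p) * x / ((1 - p) * x + p * y)))
      (-y / ((1 - p) * ((1 - p) * x + p * y))) p := by
  have hu := ((hasDerivAt_id p).const_sub 1).mul_const x
  have := (hu.div (hu.add ((hasDerivAt_id p).mul_const y)) hA).log
    (div_ne_zero (mul_ne_zero hp hx) hA)
  refine this.congr_deriv ?_
  simp only [Pi.add_apply, Pi.div_apply, id]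
  field_simp
  ring

theorem hasDerivAt_log_mul_div (hy : y ≠ 0) (hp : p ≠ 0) (hA : (1 - p) * x + p * y ≠ 0) :
    HasDerivAt (fun p => log (p * y / ((1 - p) * x + p * y)))
      (x / (p * ((1 - p) * x + p * y))) p := by
  have hv := (hasDerivAt_id p).mul_const y
  have := (hv.div ((((hasDerivAt_id p).const_sub 1).mul_const x).add hv) hA).log
    (div_ne_zero (mul_ne_zero hp hy) hA)
  refine this.congr_deriv ?_
  simp only [Pi.add_apply, Pi.div_apply, id]
  field_simp
  ring

variable (x y q p)

/-- The scaled information cost `G(p)`. -/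
noncomputable def buzzerCost : ℝ :=
  -(q * (1 - p) * y
    + (1 - p) * (1 - q) * x * log ((1 - p) * x / ((1 - p) * x + p * y))
    + (p * q * y ^ 2 / x + (p + q - 2 * p * q) * y) * log (p * y / ((1 - p) * x + p * y)))

/-- The terms in `(y - x) / A` cancel out of `G'` because
`(1 - p) (1 - q) x + (p + q - 2 p q) y + p q y² / x = A (1 - q + q y / x)`. -/
noncomputable def buzzerCostDeriv : ℝ :=
  (1 - q) * x * log ((1 - p) * x / ((1 - p) * x + p * y))
    - (q * y ^ 2 / x + (1 - 2 * q) * y) * log (p * y / ((1 - p) * x + p * y))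
    - q * y * (1 - p) / p

variable {x y q p}

theorem hasDerivAt_buzzerCost (hx : x ≠ 0) (hy : y ≠ 0) (hp₀ : p ≠ 0) (hp₁ : 1 - p ≠ 0)
    (hA : (1 - p) * x + p * y ≠ 0) :
    HasDerivAt (buzzerCost x y q) (buzzerCostDeriv x y q p) p := by
  have hL₁ := hasDerivAt_log_one_sub_mul_div (y := y) hx hp₁ hA
  have hL₂ := hasDerivAt_log_mul_div (x := x) hy hp₀ hA
  have h1p := (hasDerivAt_id p).const_sub 1
  have := ((((h1p.const_mul q).mul_const y).add
    (((h1p.mul_const (1 - q)).mul_const x).mul hL₁)).add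
    (((((hasDerivAt_id p).mul_const q).mul_const (y ^ 2)).div_const x |>.add
      ((((hasDerivAt_id p).add_const q).sub
        (((hasDerivAt_id p).const_mul 2).mul_const q)).mul_const y)).mul hL₂)).neg
  refine this.congr_deriv ?_
  simp only [buzzerCostDeriv, Pi.add_apply, Pi.sub_apply, id]
  generalize log ((1 - p) * x / ((1 - p) * x + p * y)) = L₁
  generalize log (p * y / ((1 - p) * x + p * y)) = L₂
  set A := (1 - p) * x + p * y with hA_eq
  field_simp
  rw [hA_eq]
  ring

theorem hasDerivAt_buzzerCostDeriv (hx : x ≠ 0) (hy : y ≠ 0) (hp₀ : p ≠ 0) (hp₁ : 1 - p ≠ 0)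
    (hA : (1 - p) * x + p * y ≠ 0) :
    HasDerivAt (buzzerCostDeriv x y q)
      (-((p - q) * x * y / (p ^ 2 * (1 - p) * ((1 - p) * x + p * y)))) p := by
  have hL₁ := hasDerivAt_log_one_sub_mul_div (y := y) hx hp₁ hA
  have hL₂ := hasDerivAt_log_mul_div (x := x) hy hp₀ hA
  have := ((hL₁.const_mul ((1 - q) * x)).sub
    (hL₂.const_mul (q * y ^ 2 / x + (1 - 2 * q) * y))).sub
    ((((hasDerivAt_id p).const_sub 1).const_mul (q * y)).div (hasDerivAt_id p) hp₀)
  refine this.congr_deriv ?_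
  simp only [id]
  set A := (1 - p) * x + p * y with hA_eq
  field_simp
  rw [hA_eq]
  ring

end Cost

section Potential

theorem hasDerivAt_integral_sq_sub_div_cube {c p : ℝ} (hc : 0 < c) (hp : 0 < p) :
    HasDerivAt (fun u => ∫ ℓ in u..c, (c - ℓ) ^ 2 / ℓ ^ 3) (-((c - p) ^ 2 / p ^ 3)) p := by
  have hcont : ContinuousOn (fun ℓ : ℝ => (c - ℓ) ^ 2 / ℓ ^ 3) (Ioi 0) :=
    ContinuousOn.div (by fun_prop) (by fun_prop) fun ℓ hℓ => pow_ne_zero 3 (ne_of_gt hℓ)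
  refine intervalIntegral.integral_hasDerivAt_left ?_
    (hcont.stronglyMeasurableAtFilter isOpen_Ioi p hp) (hcont.continuousAt (Ioi_mem_nhds hp))
  exact (hcont.mono fun ℓ hℓ => lt_of_lt_of_le (lt_min hp hc) hℓ.1).intervalIntegrable

variable (q c p : ℝ)

/-- The potential function `Φ_{c,(p,q)}`. -/
noncomputable def buzzerPotential : ℝ :=
  (1 - q / p) * (c - p) ^ 2 + 2 * p * q * ∫ ℓ in p..c, (c - ℓ) ^ 2 / ℓ ^ 3

noncomputable def buzzerPotentialDeriv : ℝ :=
  -2 * (1 - q / p) * (c - p) - q * (c - p) ^ 2 / p ^ 2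
    + 2 * q * ∫ ℓ in p..c, (c - ℓ) ^ 2 / ℓ ^ 3

variable {q c p}

theorem hasDerivAt_buzzerPotential (hc : 0 < c) (hp : 0 < p) :
    HasDerivAt (buzzerPotential q c) (buzzerPotentialDeriv q c p) p := by
  have := (((hasDerivAt_const p q).div (hasDerivAt_id p) hp.ne').const_sub 1).mul
    (((hasDerivAt_id p).const_sub c).pow 2) |>.add
    ((((hasDerivAt_id p).const_mul 2).mul_const q).mul (hasDerivAt_integral_sq_sub_div_cube hc hp))
  refine this.congr_deriv ?_
  simp only [buzzerPotentialDeriv, Pi.div_apply, Pi.pow_apply, id]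
  generalize (∫ ℓ in p..c, (c - ℓ) ^ 2 / ℓ ^ 3) = I
  field_simp
  ring

theorem hasDerivAt_buzzerPotentialDeriv (hc : 0 < c) (hp : 0 < p) :
    HasDerivAt (buzzerPotentialDeriv q c) (2 * (1 - q / p)) p := by
  have hqp := ((hasDerivAt_const p q).div (hasDerivAt_id p) hp.ne').const_sub 1
  have hcp := (hasDerivAt_id p).const_sub c
  have := (((hqp.const_mul (-2)).mul hcp).sub (((hcp.pow 2).const_mul q).div
    ((hasDerivAt_id p).pow 2) (pow_ne_zero 2 hp.ne'))).add
    ((hasDerivAt_integral_sq_sub_div_cube hc hp).const_mul (2 * q))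
  refine this.congr_deriv ?_
  simp only [Pi.div_apply, Pi.pow_apply, id]
  field_simp
  ring

end Potential

theorem two_mul_mul_one_sub_mul_le {x y p : ℝ} (hx : 0 ≤ x) (hy : 0 ≤ y) (hp₀ : 0 ≤ p)
    (hp₁ : p ≤ 1) : 2 * (p * (1 - p) * ((1 - p) * x + p * y)) ≤ x + y := by
  nlinarith [mul_nonneg (mul_nonneg (sub_nonneg.2 hp₁) hx) (sq_nonneg (1 - 2 * p)),
    mul_nonneg (mul_nonneg hp₀ hy) (sq_nonneg (1 - 2 * p)), mul_nonneg hp₀ hx, mul_nonneg hp₀ hy]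

theorem buzzer_second_deriv_nonpos {x y q p : ℝ} (hx : 0 < x) (hy : 0 < y) (hqp : q ≤ p)
    (hp₀ : 0 < p) (hp₁ : p < 1) :
    (x + y) / (x * y) * -((p - q) * x * y / (p ^ 2 * (1 - p) * ((1 - p) * x + p * y)))
      + 2 * (1 - q / p) ≤ 0 := by
  have hA : 0 < (1 - p) * x + p * y := add_pos (mul_pos (sub_pos.2 hp₁) hx) (mul_pos hp₀ hy)
  have hD : 0 < p * (1 - p) * ((1 - p) * x + p * y) := by
    have := sub_pos.2 hp₁
    positivity
  have hfactor :
      (x + y) / (x * y) * -((p - q) * x * y / (p ^ 2 * (1 - p) * ((1 - p) * x + p * y)))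
        + 2 * (1 - q / p)
      = (1 - q / p) * (2 - (x + y) / (p * (1 - p) * ((1 - p) * x + p * y))) := by
    field_simp
    ring
  rw [hfactor]
  refine mul_nonpos_of_nonneg_of_nonpos (sub_nonneg.2 ((div_le_one hp₀).2 hqp)) ?_
  rw [sub_nonpos, le_div_iff₀ hD]
  exact two_mul_mul_one_sub_mul_le hx.le hy.le hp₀.le hp₁.le

theorem concaveOn_buzzerCost_add_buzzerPotential {x y q c : ℝ} (hx : 0 < x) (hy : 0 < y)
    (hq : 0 < q) (hc : c < 1) :
    ConcaveOn ℝ (Icc q c)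
      (fun p => (x + y) / (x * y) * buzzerCost x y q p + buzzerPotential q c p) := by
  have hderiv : ∀ p ∈ Icc q c,
      HasDerivAt (buzzerCost x y q) (buzzerCostDeriv x y q p) p ∧
      HasDerivAt (buzzerCostDeriv x y q)
        (-((p - q) * x * y / (p ^ 2 * (1 - p) * ((1 - p) * x + p * y)))) p ∧
      HasDerivAt (buzzerPotential q c) (buzzerPotentialDeriv q c p) p ∧
      HasDerivAt (buzzerPotentialDeriv q c) (2 * (1 - q / p)) p := by
    rintro p ⟨hqp, hpc⟩
    have hp₀ : 0 < p := hq.trans_le hqp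
    have hp₁ : 0 < 1 - p := by linarith
    have hA : (1 - p) * x + p * y ≠ 0 := (add_pos (mul_pos hp₁ hx) (mul_pos hp₀ hy)).ne'
    exact ⟨hasDerivAt_buzzerCost hx.ne' hy.ne' hp₀.ne' hp₁.ne' hA,
      hasDerivAt_buzzerCostDeriv hx.ne' hy.ne' hp₀.ne' hp₁.ne' hA,
      hasDerivAt_buzzerPotential (hp₀.trans_le hpc) hp₀,
      hasDerivAt_buzzerPotentialDeriv (hp₀.trans_le hpc) hp₀⟩
  refine concaveOn_Icc_of_hasDerivAt2_nonpos
    (fun p hp => ((hderiv p hp).1.const_mul _).add (hderiv p hp).2.2.1)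
    (fun p hp => ((hderiv p (Ioo_subset_Icc_self hp)).2.1.const_mul _).add
      (hderiv p (Ioo_subset_Icc_self hp)).2.2.2)
    fun p ⟨hqp, hpc⟩ => buzzer_second_deriv_nonpos hx hy hqp.le (hq.trans hqp) (hpc.trans hc)

/-- For all `x, y > 0` there is a constant `C > 0` such that for all `0 < q < c < 1`,
the function `p ↦ C·G(p) + Φ_{c,(p,q)}` is concave on `[q,c]`, where `G` is the
closed-form scaled information cost of the buzzer protocol and the remaining term is
its closed-form potential function. -/
theorem stmt_18 (x y : ℝ) (hx : 0 < x) (hy : 0 < y) :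
    ∃ C : ℝ, 0 < C ∧ ∀ q c : ℝ, 0 < q → q < c → c < 1 →
      ConcaveOn ℝ (Set.Icc q c) (fun p : ℝ =>
        C * (-(q * (1 - p) * y
            + (1 - p) * (1 - q) * x * Real.log ((1 - p) * x / ((1 - p) * x + p * y))
            + (p * q * y ^ 2 / x + (p + q - 2 * p * q) * y)
                * Real.log (p * y / ((1 - p) * x + p * y))))
          + (1 - q / p) * (c - p) ^ 2
          + 2 * p * q * ∫ ℓ in p..c, (c - ℓ) ^ 2 / ℓ ^ 3) :=
  ⟨(x + y) / (x * y), by positivity, fun _ _ hq _ hc => by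
    simpa only [buzzerCost, buzzerPotential, add_assoc] using
      concaveOn_buzzerCost_add_buzzerPotential hx hy hq hc⟩
end
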